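/- Let A, B : ℝ → [0,∞) be continuous functions vanishing only at 0, with B(t)/A(t) → 0 as t → 0 and B(t)/A*(t) → 0 as |t| → ∞ for another continuous function A* : ℝ → [0,∞) vanishing only at 0. Suppose (u_k) is a sequence of measurable functions ℝᴺ → ℝ with ∫ A(|u_k|) dx and ∫ A*(|u_k|) dx bounded, and for every ε > 0 the Lebesgue measure of {x : |u_k(x)| > ε} tends to 0 as k → ∞. Then ∫_{ℝᴺ} B(|u_k|) dx → 0. -/

import Mathlib

/-!
Fix `η > 0`. Since `B / A → 0` at `0` and `B / A* → 0` at infinity, `B ≤ η A` on some `[-δ, δ]`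
and `B ≤ η A*` outside some `[-T, T]`; on the compact annulus `δ < |t| < T` the continuous `B` is
bounded by some `C`. Hence `∫ B(|u_k|) ≤ η (M₁ + M₂) + C · |{|u_k| > δ}|`, whose last term tends
to `0` by hypothesis, and `η` is arbitrary.
-/

open MeasureTheory Filter Metric
open scoped NNReal ENNReal Topology

theorem eventually_le_mul_of_tendsto_div_zero {α : Type*} {l : Filter α} {f g : α → ℝ}
    (h : Tendsto (fun t => f t / g t) l (𝓝 0)) (hg : ∀ᶠ t in l, 0 < g t) {η : ℝ} (hη : 0 < η) :
    ∀ᶠ t in l, f t ≤ η * g t := by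
  filter_upwards [h.eventually (gt_mem_nhds hη), hg] with t hlt hgt
  exact ((div_lt_iff₀ hgt).1 hlt).le

theorem exists_le_mul_add_indicator {A Astar B : ℝ → ℝ} (hBc : Continuous B)
    (hAnn : ∀ t, 0 ≤ A t) (hAstarnn : ∀ t, 0 ≤ Astar t)
    (hApos : ∀ t, t ≠ 0 → 0 < A t) (hAstarpos : ∀ t, t ≠ 0 → 0 < Astar t) (hB0 : B 0 = 0)
    (hlim0 : Tendsto (fun t => B t / A t) (𝓝[≠] 0) (𝓝 0))
    (hliminf : Tendsto (fun t => B t / Astar t) (comap abs atTop) (𝓝 0)) {η : ℝ} (hη : 0 < η) :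
    ∃ δ > 0, ∃ C : ℝ, ∀ t,
      B t ≤ η * (A t + Astar t) + {t | δ < |t|}.indicator (fun _ => C) t := by
  have hsmall : ∀ᶠ t in 𝓝 0, B t ≤ η * A t := by
    have := eventually_le_mul_of_tendsto_div_zero hlim0
      (eventually_nhdsWithin_of_forall fun t ht => hApos t ht) hη
    filter_upwards [eventually_nhdsWithin_iff.1 this] with t ht
    rcases eq_or_ne t 0 with rfl | h0
    · simpa [hB0] using mul_nonneg hη.le (hAnn 0)
    · exact ht h0
  have hlarge : ∀ᶠ t in comap abs atTop, B t ≤ η * Astar t := by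
    refine eventually_le_mul_of_tendsto_div_zero hliminf ?_ hη
    filter_upwards [(eventually_gt_atTop 0).comap abs] with t ht
    exact hAstarpos t (abs_pos.1 ht)
  obtain ⟨δ, hδ, hδB⟩ := nhds_basis_closedBall.eventually_iff.1 hsmall
  obtain ⟨T, -, hTB⟩ := (atTop_basis.comap abs).eventually_iff.1 hlarge
  obtain ⟨C, hC⟩ := (isCompact_Icc (a := -T) (b := T)).bddAbove_image hBc.continuousOn
  refine ⟨δ, hδ, max C 0, fun t => ?_⟩
  have hηA : 0 ≤ η * A t := mul_nonneg hη.le (hAnn t)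
  have hηAstar : 0 ≤ η * Astar t := mul_nonneg hη.le (hAstarnn t)
  rw [mul_add]
  simp only [Set.indicator_apply, Set.mem_ofPred_eq]
  split_ifs with hδt
  · rcases le_or_gt T |t| with hTt | hTt
    · linarith [hTB hTt, le_max_right C 0]
    · linarith [hC ⟨t, abs_le.1 hTt.le, rfl⟩, le_max_left C 0]
  · linarith [hδB (by simpa using not_lt.1 hδt)]

theorem lintegral_ofReal_le_of_le_mul_add_indicator {α : Type*} [MeasurableSpace α]
    {μ : Measure α} {A Astar B : ℝ → ℝ} {v : α → ℝ} (hA : Measurable A) (hv : Measurable v)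
    {η : ℝ≥0} {δ C : ℝ}
    (h : ∀ t, B t ≤ η * (A t + Astar t) + {t | δ < |t|}.indicator (fun _ => C) t) :
    ∫⁻ x, ENNReal.ofReal (B |v x|) ∂μ ≤
      η * (∫⁻ x, ENNReal.ofReal (A |v x|) ∂μ + ∫⁻ x, ENNReal.ofReal (Astar |v x|) ∂μ) +
        ENNReal.ofReal C * μ {x | δ < |v x|} := by
  have hs : MeasurableSet {x | δ < |v x|} := measurableSet_lt measurable_const hv.abs
  have hAv : Measurable fun x => ENNReal.ofReal (A |v x|) := (hA.comp hv.abs).ennreal_ofReal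
  have hmul (a b : ℝ) :
      ENNReal.ofReal (η * (a + b)) ≤ η * (ENNReal.ofReal a + ENNReal.ofReal b) := by
    rw [ENNReal.ofReal_mul η.coe_nonneg, ENNReal.ofReal_coe_nnreal]
    gcongr
    exact ENNReal.ofReal_add_le
  calc ∫⁻ x, ENNReal.ofReal (B |v x|) ∂μ
      ≤ ∫⁻ x, η * (ENNReal.ofReal (A |v x|) + ENNReal.ofReal (Astar |v x|)) +
          {x | δ < |v x|}.indicator (fun _ => ENNReal.ofReal C) x ∂μ := by
        refine lintegral_mono fun x => (ENNReal.ofReal_le_ofReal (h |v x|)).trans ?_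
        simp only [Set.indicator_apply, Set.mem_ofPred_eq, abs_abs]
        split_ifs
        · exact ENNReal.ofReal_add_le.trans (add_le_add_left (hmul _ _) _)
        · simpa using hmul _ _
    _ = _ := by
      rw [lintegral_add_right _ (measurable_const.indicator hs),
        lintegral_const_mul' _ _ ENNReal.coe_ne_top,
        lintegral_add_left hAv,
        lintegral_indicator_const hs]

theorem ENNReal.tendsto_nhds_zero_of_le_mul_add {ι : Type*} {l : Filter ι} {f : ι → ℝ≥0∞}
    {M : ℝ≥0∞} (hM : M ≠ ∞)
    (h : ∀ η : ℝ≥0, 0 < η → ∃ g : ι → ℝ≥0∞, Tendsto g l (𝓝 0) ∧ ∀ i, f i ≤ η * M + g i) :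
    Tendsto f l (𝓝 0) := by
  refine ENNReal.tendsto_nhds_zero.2 fun ε hε => ?_
  obtain ⟨η, hη, hηM⟩ := ENNReal.exists_nnreal_pos_mul_lt hM (ENNReal.half_pos hε.ne').ne'
  obtain ⟨g, hg, hfg⟩ := h η hη
  filter_upwards [hg.eventually (ge_mem_nhds (ENNReal.half_pos hε.ne'))] with i hi
  calc f i ≤ η * M + g i := hfg i
    _ ≤ ε / 2 + ε / 2 := add_le_add hηM.le hi
    _ = ε := ENNReal.add_halves ε

theorem lions_nonreflexive_general
    (N : ℕ)
    (A Astar B : ℝ → ℝ)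
    (hAc : Continuous A) (hBc : Continuous B)
    (hAnn : ∀ t, 0 ≤ A t) (hAstarnn : ∀ t, 0 ≤ Astar t)
    (hAzero : ∀ t, A t = 0 ↔ t = 0)
    (hAstarzero : ∀ t, Astar t = 0 ↔ t = 0)
    (hBzero : ∀ t, B t = 0 ↔ t = 0)
    (hlim0 : Tendsto (fun t => B t / A t) (nhdsWithin 0 {0}ᶜ) (nhds 0))
    (hliminf : Tendsto (fun t => B t / Astar t) (Filter.comap abs Filter.atTop) (nhds 0))
    (u : ℕ → EuclideanSpace ℝ (Fin N) → ℝ)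
    (hum : ∀ k, Measurable (u k))
    (M₁ M₂ : ℝ)
    (hbd₁ : ∀ k, ∫⁻ x, ENNReal.ofReal (A |u k x|) ≤ ENNReal.ofReal M₁)
    (hbd₂ : ∀ k, ∫⁻ x, ENNReal.ofReal (Astar |u k x|) ≤ ENNReal.ofReal M₂)
    (hmeas : ∀ ε : ℝ, 0 < ε →
      Tendsto (fun k => volume {x | ε < |u k x|}) atTop (nhds 0)) :
    Tendsto (fun k => ∫⁻ x, ENNReal.ofReal (B |u k x|)) atTop (nhds 0) := by
  have hApos (t : ℝ) (ht : t ≠ 0) : 0 < A t := (hAnn t).lt_of_ne' (mt (hAzero t).1 ht)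
  have hAstarpos (t : ℝ) (ht : t ≠ 0) : 0 < Astar t :=
    (hAstarnn t).lt_of_ne' (mt (hAstarzero t).1 ht)
  refine ENNReal.tendsto_nhds_zero_of_le_mul_add
    (M := ENNReal.ofReal M₁ + ENNReal.ofReal M₂) (by finiteness) fun η hη => ?_
  obtain ⟨δ, hδ, C, hB⟩ := exists_le_mul_add_indicator hBc hAnn hAstarnn hApos hAstarpos
    ((hBzero 0).2 rfl) hlim0 hliminf (NNReal.coe_pos.2 hη)
  have hvanish : Tendsto (fun k => ENNReal.ofReal C * volume {x | δ < |u k x|}) atTop (𝓝 0) := by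
    simpa using ENNReal.Tendsto.const_mul (hmeas δ hδ) (Or.inr ENNReal.ofReal_ne_top)
  refine ⟨_, hvanish, fun k => ?_⟩
  calc ∫⁻ x, ENNReal.ofReal (B |u k x|)
      ≤ η * ((∫⁻ x, ENNReal.ofReal (A |u k x|)) + ∫⁻ x, ENNReal.ofReal (Astar |u k x|)) +
          ENNReal.ofReal C * volume {x | δ < |u k x|} :=
        lintegral_ofReal_le_of_le_mul_add_indicator hAc.measurable (hum k) hB
    _ ≤ η * (ENNReal.ofReal M₁ + ENNReal.ofReal M₂) +
          ENNReal.ofReal C * volume {x | δ < |u k x|} := by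
        gcongr
        exacts [hbd₁ k, hbd₂ k]

/-- Non-reflexive Orlicz-type Lions lemma (Alves–Carvalho), measure-theoretic form. -/
theorem lions_nonreflexive
    (N : ℕ)
    (A Astar B : ℝ → ℝ)
    (hAc : Continuous A) (hAstarc : Continuous Astar) (hBc : Continuous B)
    (hAnn : ∀ t, 0 ≤ A t) (hAstarnn : ∀ t, 0 ≤ Astar t) (hBnn : ∀ t, 0 ≤ B t)
    (hAzero : ∀ t, A t = 0 ↔ t = 0)
    (hAstarzero : ∀ t, Astar t = 0 ↔ t = 0)
    (hBzero : ∀ t, B t = 0 ↔ t = 0)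
    (hlim0 : Tendsto (fun t => B t / A t) (nhdsWithin 0 {0}ᶜ) (nhds 0))
    (hliminf : Tendsto (fun t => B t / Astar t) (Filter.comap abs Filter.atTop) (nhds 0))
    (u : ℕ → EuclideanSpace ℝ (Fin N) → ℝ)
    (hum : ∀ k, Measurable (u k))
    (M₁ M₂ : ℝ)
    (hbd₁ : ∀ k, ∫⁻ x, ENNReal.ofReal (A |u k x|) ≤ ENNReal.ofReal M₁)
    (hbd₂ : ∀ k, ∫⁻ x, ENNReal.ofReal (Astar |u k x|) ≤ ENNReal.ofReal M₂)
    (hmeas : ∀ ε : ℝ, 0 < ε →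
      Tendsto (fun k => volume {x | ε < |u k x|}) atTop (nhds 0)) :
    Tendsto (fun k => ∫⁻ x, ENNReal.ofReal (B |u k x|)) atTop (nhds 0) :=
  lions_nonreflexive_general N A Astar B hAc hBc hAnn hAstarnn hAzero hAstarzero hBzero hlim0
    hliminf u hum M₁ M₂ hbd₁ hbd₂ hmeas
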